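/- Let K ⊂ ℝ² be a convex body with boundary Γ, let α > 0 and x ∈ ℝ² with x ≠ 0. If Γ ∩ (αΓ + x) contains three distinct points, then at least one of these points lies on a (nondegenerate) line segment contained in Γ. -/

import Mathlib

/-!
Write `T y = α • y + x` and `Pᵢ = T Qᵢ`, and suppose no `Pᵢ` lies on a segment in `Γ`. Then the line
through `Pᵢ` and `Qᵢ` meets `K` exactly in `[Pᵢ, Qᵢ]`. This line is `T`-invariant and `T` moves the
point with parameter `s` to the one with parameter `α (s - 1) ≤ 0`; so the only point of `K` on it
with a `T`-preimage in `K` is `Pᵢ`.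

Since the linear part of `T` is a scalar, "`z` lies to the left of the invariant line through `P`"
is antisymmetric in `P` and `z`. Hence either some `Pᵢ` lies on the line of `Pⱼ`, which forces
`Pᵢ = Pⱼ`, or the line of some `Pⱼ` separates the other two points. It then crosses `[Pᵢ, Pₖ]` at
a point whose preimage lies in `[Qᵢ, Qₖ] ⊆ K`, so the crossing point is `Pⱼ`, and `Pⱼ` lies inside
the segment `[Pᵢ, Pₖ] ⊆ Γ`.
-/

open Set AffineMap

section Segment

variable {E : Type*} [AddCommGroup E] [Module ℝ E] [TopologicalSpace E]

def OnFrontierSegment (K : Set E) (P : E) : Prop :=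
  ∃ A B : E, A ≠ B ∧ P ∈ segment ℝ A B ∧ segment ℝ A B ⊆ frontier K

variable [IsTopologicalAddGroup E] [ContinuousSMul ℝ E] {K : Set E}

theorem Convex.segment_subset_frontier_of_mem_openSegment (hK : Convex ℝ K) {a b P : E}
    (ha : a ∈ K) (hb : b ∈ K) (hP : P ∈ frontier K) (hPab : P ∈ openSegment ℝ a b) :
    segment ℝ a b ⊆ frontier K := by
  intro q hq
  refine ⟨subset_closure (hK.segment_subset ha hb hq), fun hqK => hP.2 ?_⟩
  have hq_line : q ∈ range (lineMap a b : ℝ → E) := by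
    rw [segment_eq_image_lineMap] at hq
    exact image_subset_range _ _ hq
  rcases openSegment_subset_union a b hq_line hPab with rfl | hPaq | hPqb
  · exact hqK
  · exact hK.openSegment_interior_self_subset_interior hqK ha (openSegment_symm ℝ a q ▸ hPaq)
  · exact hK.openSegment_interior_self_subset_interior hqK hb hPqb

theorem Convex.mem_Icc_of_lineMap_mem (hK : Convex ℝ K) (hKc : IsClosed K) {P Q : E}
    (hP : P ∈ frontier K) (hQ : Q ∈ frontier K) (hPQ : P ≠ Q) (hPs : ¬ OnFrontierSegment K P)
    {t : ℝ} (ht : lineMap P Q t ∈ K) : t ∈ Icc 0 1 := by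
  by_contra hIcc
  rw [Set.mem_Icc, not_and_or, not_le, not_le] at hIcc
  rcases hIcc with ht0 | ht1
  · have hne : lineMap P Q t ≠ Q := by
      rw [Ne, lineMap_eq_right_iff, not_or]
      exact ⟨hPQ, by linarith⟩
    have hmem : P ∈ openSegment ℝ (lineMap P Q t) Q := by
      have h1t : 0 < 1 - t := by linarith
      convert lineMap_mem_openSegment ℝ (lineMap P Q t) Q (t := -t / (1 - t))
        ⟨by apply div_pos <;> linarith, by rw [div_lt_one h1t]; linarith⟩
      rw [lineMap_lineMap_left, show 1 - (1 - -t / (1 - t)) * (1 - t) = 0 by field_simp; ring,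
        lineMap_apply_zero]
    exact hPs ⟨_, Q, hne, openSegment_subset_segment ℝ _ _ hmem,
      hK.segment_subset_frontier_of_mem_openSegment ht (hKc.frontier_subset hQ) hP hmem⟩
  · have hne : P ≠ lineMap P Q t := by
      rw [Ne, eq_comm, lineMap_eq_left_iff, not_or]
      exact ⟨hPQ, by linarith⟩
    have hmem : Q ∈ openSegment ℝ P (lineMap P Q t) := by
      convert lineMap_mem_openSegment ℝ P (lineMap P Q t) (t := 1 / t)
        ⟨by positivity, by rw [div_lt_one (by linarith)]; exact ht1⟩
      rw [lineMap_lineMap_right, one_div_mul_cancel (by positivity), lineMap_apply_one]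
    exact hPs ⟨P, _, hne, left_mem_segment ℝ _ _,
      hK.segment_subset_frontier_of_mem_openSegment (hKc.frontier_subset hP) ht hQ hmem⟩

end Segment

section Homothety

variable {E : Type*} [AddCommGroup E] [Module ℝ E] {α : ℝ} {x P Q : E}

theorem smul_lineMap_add (hQP : α • Q + x = P) (t : ℝ) :
    α • lineMap P Q t + x = lineMap P Q (α * (t - 1)) := by
  subst hQP
  simp only [lineMap_apply_module]
  module

theorem eq_zero_of_smul_add_eq_lineMap {K : Set E} (hα : 0 < α) (hQP : α • Q + x = P)
    (hline : ∀ t, lineMap P Q t ∈ K → t ∈ Icc (0 : ℝ) 1) {s : ℝ} (hs : lineMap P Q s ∈ K)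
    {y : E} (hy : y ∈ K) (hys : α • y + x = lineMap P Q s) : s = 0 := by
  have hy_line : y = lineMap P Q (1 + s / α) := by
    apply smul_right_injective E hα.ne'
    apply add_right_cancel (b := x)
    rw [hys, smul_lineMap_add hQP]
    congr 1
    field_simp
    ring
  have hy_le := (hline _ (hy_line ▸ hy)).2
  have hs_nonneg := (hline s hs).1
  have hsα : s / α ≤ 0 := by linarith
  exact le_antisymm (by simpa using (div_le_iff₀ hα).1 hsα) hs_nonneg

theorem eq_of_smul_add_eq_self (hx : x ≠ 0) {a b : E} (ha : α • a + x = a) (hb : α • b + x = b) :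
    a = b := by
  have h : (1 - α) • (a - b) = 0 := by linear_combination (norm := module) hb - ha
  rcases smul_eq_zero.1 h with hα1 | hab
  · rw [show α = 1 by linarith, one_smul, add_eq_left] at ha
    exact absurd ha hx
  · exact sub_eq_zero.1 hab

end Homothety

section Plane

def cross (u v : ℝ × ℝ) : ℝ := u.1 * v.2 - u.2 * v.1

theorem exists_eq_smul_of_cross_eq_zero {u v : ℝ × ℝ} (hv : v ≠ 0) (h : cross u v = 0) :
    ∃ t : ℝ, u = t • v := by
  have hv2 : 0 < v.1 ^ 2 + v.2 ^ 2 := by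
    rcases eq_or_ne v.1 0 with h1 | h1
    · have h2 : v.2 ≠ 0 := fun h2 => hv (Prod.ext h1 h2)
      positivity
    · positivity
  unfold cross at h
  refine ⟨(u.1 * v.1 + u.2 * v.2) / (v.1 ^ 2 + v.2 ^ 2), Prod.ext ?_ ?_⟩ <;>
    simp only [Prod.smul_fst, Prod.smul_snd, smul_eq_mul] <;> field_simp
  · linear_combination v.2 * h
  · linear_combination -v.1 * h

/-- The lines through `P` and `α • P + x` are the lines invariant under `y ↦ α • y + x`: the lines
through its centre if `α ≠ 1`, the lines parallel to `x` if `α = 1`. The sign of `side α x P z`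
tells on which side of the invariant line through `P` the point `z` lies. -/
def side (α : ℝ) (x P z : ℝ × ℝ) : ℝ := cross (z - P) (P - (α • P + x))

variable {α : ℝ} {x : ℝ × ℝ}

/-- Antisymmetry holds because the linear part of `y ↦ α • y + x` is a scalar. -/
theorem side_swap (P z : ℝ × ℝ) : side α x z P = -side α x P z := by
  simp only [side, cross, Prod.fst_sub, Prod.snd_sub, Prod.fst_add, Prod.snd_add, Prod.smul_fst,
    Prod.smul_snd, smul_eq_mul]
  ring

theorem side_lineMap (P a b : ℝ × ℝ) (t : ℝ) :
    side α x P (lineMap a b t) = (1 - t) * side α x P a + t * side α x P b := by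
  simp only [side, cross, lineMap_apply_module, Prod.fst_sub, Prod.snd_sub, Prod.fst_add,
    Prod.snd_add, Prod.smul_fst, Prod.smul_snd, smul_eq_mul]
  ring

theorem side_eq_zero_of_smul_add_eq_self {P : ℝ × ℝ} (hP : α • P + x = P) (z : ℝ × ℝ) :
    side α x P z = 0 := by
  simp [side, hP, cross]

theorem exists_eq_lineMap_of_side_eq_zero (hα : α ≠ 0) {P Q z : ℝ × ℝ} (hQP : α • Q + x = P)
    (hPQ : P ≠ Q) (h : side α x P z = 0) : ∃ t : ℝ, z = lineMap P Q t := by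
  have hside : side α x P z = α * cross (z - P) (Q - P) := by
    subst hQP
    simp only [side, cross, Prod.fst_sub, Prod.snd_sub, Prod.fst_add, Prod.snd_add,
      Prod.smul_fst, Prod.smul_snd, smul_eq_mul]
    ring
  rw [hside, mul_eq_zero, or_iff_right hα] at h
  obtain ⟨t, ht⟩ := exists_eq_smul_of_cross_eq_zero (sub_ne_zero.2 hPQ.symm) h
  exact ⟨t, by rw [lineMap_apply_module', ← ht, sub_add_cancel]⟩

theorem exists_side_lineMap_eq_zero {P a b : ℝ × ℝ} (h : side α x P a * side α x P b < 0) :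
    ∃ t ∈ Ioo (0 : ℝ) 1, side α x P (lineMap a b t) = 0 := by
  have hne : side α x P a - side α x P b ≠ 0 := by
    intro h0
    rw [sub_eq_zero.1 h0] at h
    exact (mul_self_nonneg _).not_gt h
  refine ⟨side α x P a / (side α x P a - side α x P b), ?_, ?_⟩
  · rcases mul_neg_iff.1 h with ⟨ha, hb⟩ | ⟨ha, hb⟩
    · exact ⟨div_pos ha (by linarith), (div_lt_one (by linarith)).2 (by linarith)⟩
    · exact ⟨div_pos_of_neg_of_neg ha (by linarith),
        (div_lt_one_of_neg (by linarith)).2 (by linarith)⟩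
  · rw [side_lineMap]
    field_simp
    ring

end Plane

theorem pos_mul_or_pos_mul_or_pos_mul {a b c : ℝ} (ha : a ≠ 0) (hb : b ≠ 0) (hc : c ≠ 0) :
    0 < a * b ∨ 0 < b * c ∨ 0 < c * a := by
  rcases ha.lt_or_gt with ha | ha <;> rcases hb.lt_or_gt with hb | hb <;>
    rcases hc.lt_or_gt with hc | hc <;> simp [mul_pos_iff, *]

section Configuration

variable {K : Set (ℝ × ℝ)} {α : ℝ} {x : ℝ × ℝ} {Pa Pb Pc : ℝ × ℝ}

theorem eq_of_side_eq_zero (hK : Convex ℝ K) (hKc : IsClosed K) (hα : 0 < α)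
    (ha : Pa ∈ frontier K ∩ (fun y => α • y + x) '' frontier K)
    (hb : Pb ∈ frontier K ∩ (fun y => α • y + x) '' frontier K)
    (hbs : ¬ OnFrontierSegment K Pb) (hb_fixed : α • Pb + x ≠ Pb) (h : side α x Pb Pa = 0) :
    Pa = Pb := by
  obtain ⟨hPa, Qa, hQa, hQPa⟩ := ha
  obtain ⟨hPb, Qb, hQb, hQPb⟩ := hb
  have hPQb : Pb ≠ Qb := by rintro rfl; exact hb_fixed hQPb
  obtain ⟨s, rfl⟩ := exists_eq_lineMap_of_side_eq_zero hα.ne' hQPb hPQb h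
  have hline t := hK.mem_Icc_of_lineMap_mem hKc hPb hQb hPQb hbs (t := t)
  rw [eq_zero_of_smul_add_eq_lineMap hα hQPb hline (hKc.frontier_subset hPa)
    (hKc.frontier_subset hQa) hQPa, lineMap_apply_zero]

theorem side_ne_zero (hK : Convex ℝ K) (hKc : IsClosed K) (hα : 0 < α) (hx : x ≠ 0)
    (ha : Pa ∈ frontier K ∩ (fun y => α • y + x) '' frontier K)
    (hb : Pb ∈ frontier K ∩ (fun y => α • y + x) '' frontier K) (hab : Pa ≠ Pb)
    (has : ¬ OnFrontierSegment K Pa) (hbs : ¬ OnFrontierSegment K Pb) :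
    side α x Pb Pa ≠ 0 := by
  intro h
  by_cases hb_fixed : α • Pb + x = Pb
  · have ha_fixed : α • Pa + x ≠ Pa := fun ha_fixed =>
      hab (eq_of_smul_add_eq_self hx ha_fixed hb_fixed)
    have h' : side α x Pa Pb = 0 := by rw [side_swap, h, neg_zero]
    exact hab (eq_of_side_eq_zero hK hKc hα hb ha has ha_fixed h').symm
  · exact hab (eq_of_side_eq_zero hK hKc hα ha hb hbs hb_fixed h)

theorem onFrontierSegment_of_side_mul_side_pos (hK : Convex ℝ K) (hKc : IsClosed K) (hα : 0 < α)
    (ha : Pa ∈ frontier K ∩ (fun y => α • y + x) '' frontier K)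
    (hb : Pb ∈ frontier K ∩ (fun y => α • y + x) '' frontier K)
    (hc : Pc ∈ frontier K ∩ (fun y => α • y + x) '' frontier K)
    (h : 0 < side α x Pa Pb * side α x Pb Pc) : OnFrontierSegment K Pb := by
  by_contra hbs
  obtain ⟨hPa, Qa, hQa, hQPa⟩ := ha
  obtain ⟨hPb, Qb, hQb, hQPb⟩ := hb
  obtain ⟨hPc, Qc, hQc, hQPc⟩ := hc
  rw [side_swap, neg_mul, neg_pos] at h
  have hPQb : Pb ≠ Qb := by
    rintro rfl
    simp [side_eq_zero_of_smul_add_eq_self hQPb] at h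
  obtain ⟨t, ht, hmb⟩ := exists_side_lineMap_eq_zero h
  obtain ⟨s, hs⟩ := exists_eq_lineMap_of_side_eq_zero hα.ne' hQPb hPQb hmb
  have hm : lineMap Pa Pc t ∈ K :=
    hK.lineMap_mem (hKc.frontier_subset hPa) (hKc.frontier_subset hPc) ⟨ht.1.le, ht.2.le⟩
  have hm' : lineMap Qa Qc t ∈ K :=
    hK.lineMap_mem (hKc.frontier_subset hQa) (hKc.frontier_subset hQc) ⟨ht.1.le, ht.2.le⟩
  have hT : α • lineMap Qa Qc t + x = lineMap Pa Pc t := by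
    rw [← hQPa, ← hQPc]
    simp only [lineMap_apply_module]
    module
  have hs0 : s = 0 := eq_zero_of_smul_add_eq_lineMap hα hQPb
    (fun _ => hK.mem_Icc_of_lineMap_mem hKc hPb hQb hPQb hbs) (hs ▸ hm) hm' (hs ▸ hT)
  have hmem : Pb ∈ openSegment ℝ Pa Pc := by
    rw [← lineMap_apply_zero (k := ℝ) Pb Qb, ← hs0, ← hs]
    exact lineMap_mem_openSegment ℝ Pa Pc ht
  have hac : Pa ≠ Pc := by
    rintro rfl
    exact (mul_self_nonneg _).not_gt h
  exact hbs ⟨Pa, Pc, hac, openSegment_subset_segment ℝ _ _ hmem,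
    hK.segment_subset_frontier_of_mem_openSegment (hKc.frontier_subset hPa)
      (hKc.frontier_subset hPc) hPb hmem⟩

end Configuration

theorem stmt_5_general (K : Set (ℝ × ℝ)) (hK : Convex ℝ K) (hcomp : IsCompact K)
    (α : ℝ) (hα : 0 < α) (x : ℝ × ℝ) (hx : x ≠ 0)
    (P₁ P₂ P₃ : ℝ × ℝ) (h12 : P₁ ≠ P₂) (h13 : P₁ ≠ P₃) (h23 : P₂ ≠ P₃)
    (hmem : ∀ P ∈ ({P₁, P₂, P₃} : Set (ℝ × ℝ)),
      P ∈ frontier K ∩ ((fun y => α • y + x) '' frontier K)) :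
    ∃ P ∈ ({P₁, P₂, P₃} : Set (ℝ × ℝ)), ∃ A B : ℝ × ℝ, A ≠ B ∧
      P ∈ segment ℝ A B ∧ segment ℝ A B ⊆ frontier K := by
  have hKc := hcomp.isClosed
  simp only [forall_mem_insert, forall_eq, mem_singleton_iff] at hmem
  obtain ⟨h₁, h₂, h₃⟩ := hmem
  by_contra hno
  simp only [exists_mem_insert, mem_singleton_iff, exists_eq_left, not_or] at hno
  obtain ⟨hs₁, hs₂, hs₃⟩ := hno
  have h₁₂ := side_ne_zero hK hKc hα hx h₂ h₁ h12.symm hs₂ hs₁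
  have h₂₃ := side_ne_zero hK hKc hα hx h₃ h₂ h23.symm hs₃ hs₂
  have h₃₁ := side_ne_zero hK hKc hα hx h₁ h₃ h13 hs₁ hs₃
  rcases pos_mul_or_pos_mul_or_pos_mul h₁₂ h₂₃ h₃₁ with h | h | h
  · exact hs₂ (onFrontierSegment_of_side_mul_side_pos hK hKc hα h₁ h₂ h₃ h)
  · exact hs₃ (onFrontierSegment_of_side_mul_side_pos hK hKc hα h₂ h₃ h₁ h)
  · exact hs₁ (onFrontierSegment_of_side_mul_side_pos hK hKc hα h₃ h₁ h₂ h)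

/-- Let `K ⊆ ℝ²` be a convex body with boundary `Γ`, `α > 0`, `x ≠ 0`.
If `Γ ∩ (αΓ + x)` contains three distinct points, then at least one of them
lies on a nondegenerate line segment contained in `Γ`. -/
theorem stmt_5 (K : Set (ℝ × ℝ)) (hK : Convex ℝ K) (hcomp : IsCompact K)
    (hint : (interior K).Nonempty) (α : ℝ) (hα : 0 < α) (x : ℝ × ℝ) (hx : x ≠ 0)
    (P₁ P₂ P₃ : ℝ × ℝ) (h12 : P₁ ≠ P₂) (h13 : P₁ ≠ P₃) (h23 : P₂ ≠ P₃)
    (hmem : ∀ P ∈ ({P₁, P₂, P₃} : Set (ℝ × ℝ)),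
      P ∈ frontier K ∩ ((fun y => α • y + x) '' frontier K)) :
    ∃ P ∈ ({P₁, P₂, P₃} : Set (ℝ × ℝ)), ∃ A B : ℝ × ℝ, A ≠ B ∧
      P ∈ segment ℝ A B ∧ segment ℝ A B ⊆ frontier K :=
  stmt_5_general K hK hcomp α hα x hx P₁ P₂ P₃ h12 h13 h23 hmem
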